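/- Continuity of the driver in the jump variable: Let u : ℝ → ℝ be a bounded Borel function with ∫ u² dν < ∞ and let (u_n)_{n≥1} be Borel functions with ∫ u_n² dν < ∞ for all n, sup_n sup_e |u_n(e)| < ∞, and ∫ (u_n − u)² dν → 0 as n → ∞. Then f(z, u_n) → f(z, u) as n → ∞, for every z ∈ ℝ. -/

import Mathlib

open MeasureTheory Set

noncomputable section

/-- The no-signal part `f¹(z,u,p)` of the driver. -/
def f1d (ν : Measure ℝ) (η γ : ℝ → ℝ) (lam sig Cke : ℝ)
    (z : ℝ) (u : ℝ → ℝ) (p : ℝ) : ℝ :=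
  lam / 2 * (sig * p - (z + Cke / lam)) ^ 2
    + ∫ e in {e | γ e = 0}, ((Real.exp (lam * (u e - p * η e)) - 1) / lam - u e) ∂ν

/-- The signal part `f²(g,u,p)` of the driver. -/
def f2d (η γ : ℝ → ℝ) (K : ℝ → Measure ℝ) (lam : ℝ)
    (g : ℝ) (u : ℝ → ℝ) (p : ℝ) : ℝ :=
  ∫ e in {e | γ e = g}, ((Real.exp (lam * (u e - p * η e)) - 1) / lam - u e) ∂(K g)

/-- The driver `f(z,u)` of the BSDE for exponential utility maximization with signals. -/
def fdrv (ν μ : Measure ℝ) (η γ : ℝ → ℝ) (K : ℝ → Measure ℝ)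
    (lam sig Cke pil pib : ℝ) (z : ℝ) (u : ℝ → ℝ) : ℝ :=
  (⨅ p : Set.Icc (-pil) pib, f1d ν η γ lam sig Cke z u p)
    + (∫ g in ({0}ᶜ : Set ℝ), (⨅ p : Set.Icc (-pil) pib, f2d η γ K lam g u p) ∂μ)
    - Cke * z - Cke ^ 2 / (2 * lam)

/-! For fixed `p` the integrand `(e^{λ(u - pη)} - 1)/λ - u` is locally Lipschitz in `u`, with
constant of order `|u| + |pη|` (mean value theorem for `x ↦ eˣ - x`), uniformly for
`p ∈ [-π̲, π̄]` because `u` and `η` are bounded. Hence, with `π = max(π̲, π̄)`, the infima over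
`p` of `f¹(z, uₙ, ·)` and `f¹(z, u, ·)` differ by at most
`∫ (|uₙ - u| + 2|u| + 2π|η|) |uₙ - u| dν`, and so do the `μ`-integrals of the infima of `f²`,
once `ν` on `{γ ≠ 0}` is disintegrated along `K`. By Cauchy–Schwarz this bound tends to `0` as
`uₙ → u` in `L²(ν)`, since `η ∈ L²(ν)` by `|η| ≤ C₀ (1 ∧ |e|)`. The infimum of `f²` is
measurable in `g` because it is continuous in `p`, so it can be taken over a countable dense
set. -/

open Filter Topology ProbabilityTheory

lemma abs_exp_sub_one_le_exp_abs_mul_abs (x : ℝ) : |Real.exp x - 1| ≤ Real.exp |x| * |x| := by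
  have hmem : ∀ y, |y| ≤ |x| → y ∈ Icc (-|x|) |x| := fun y hy => abs_le.1 hy
  have h := Convex.norm_image_sub_le_of_norm_deriv_le (f := Real.exp) (C := Real.exp |x|)
    (fun y _ => Real.differentiableAt_exp) (fun y hy => ?_) (convex_Icc _ _)
    (hmem 0 (by simp)) (hmem x le_rfl)
  · simpa using h
  · rw [Real.deriv_exp, Real.norm_of_nonneg (Real.exp_pos y).le]
    exact Real.exp_le_exp.2 ((le_abs_self y).trans (abs_le.2 hy))

lemma abs_exp_sub_exp_sub_sub_le {a b R : ℝ} (ha : |a| ≤ R) (hb : |b| ≤ R) :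
    |Real.exp a - Real.exp b - (a - b)| ≤ Real.exp R * (|a| + |b|) * |a - b| := by
  set r := max |a| |b|
  have hmem : ∀ x, |x| ≤ r → x ∈ Icc (-r) r := fun x hx => abs_le.1 hx
  have h := Convex.norm_image_sub_le_of_norm_deriv_le (f := fun x => Real.exp x - x)
    (C := Real.exp R * (|a| + |b|)) (fun x _ => by fun_prop) (fun x hx => ?_) (convex_Icc _ _)
    (hmem b (le_max_right _ _)) (hmem a (le_max_left _ _))
  · rw [Real.norm_eq_abs, Real.norm_eq_abs] at h
    convert h using 2
    ring
  · have hx : |x| ≤ r := abs_le.2 hx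
    have hr : r ≤ |a| + |b| := max_le (le_add_of_nonneg_right (abs_nonneg _))
      (le_add_of_nonneg_left (abs_nonneg _))
    have hderiv : deriv (fun x => Real.exp x - x) x = Real.exp x - 1 := by simp
    rw [hderiv, Real.norm_eq_abs]
    exact (abs_exp_sub_one_le_exp_abs_mul_abs x).trans (mul_le_mul
      (Real.exp_le_exp.2 (hx.trans (max_le ha hb))) (hx.trans hr) (abs_nonneg _)
      (Real.exp_pos _).le)

def jumpIntegrand (lam y q : ℝ) : ℝ := (Real.exp (lam * (y - q)) - 1) / lam - y

section JumpIntegrand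

variable {lam y y' q t M Q R : ℝ}

@[simp]
lemma jumpIntegrand_self (lam q : ℝ) : jumpIntegrand lam q q = -q := by
  simp [jumpIntegrand]

lemma abs_jumpIntegrand_sub_le (hlam : 0 < lam) (hy : |lam * (y - q)| ≤ R)
    (hy' : |lam * (y' - q)| ≤ R) :
    |jumpIntegrand lam y q - jumpIntegrand lam y' q|
      ≤ lam * Real.exp R * (|y - q| + |y' - q|) * |y - y'| := by
  have hdiff : jumpIntegrand lam y q - jumpIntegrand lam y' q
      = (Real.exp (lam * (y - q)) - Real.exp (lam * (y' - q))
          - (lam * (y - q) - lam * (y' - q))) / lam := by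
    unfold jumpIntegrand
    field_simp
    ring
  rw [hdiff, abs_div, abs_of_pos hlam, div_le_iff₀ hlam]
  refine (abs_exp_sub_exp_sub_sub_le hy hy').trans (le_of_eq ?_)
  rw [show lam * (y - q) - lam * (y' - q) = lam * (y - y') by ring]
  simp only [abs_mul, abs_of_pos hlam]
  ring

lemma abs_mul_sub_le_mul_add (hlam : 0 ≤ lam) (hy : |y| ≤ M) (hq : |q| ≤ Q) :
    |lam * (y - q)| ≤ lam * (M + Q) := by
  rw [abs_mul, abs_of_nonneg hlam]
  exact mul_le_mul_of_nonneg_left ((abs_sub _ _).trans (add_le_add hy hq)) hlam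

lemma abs_jumpIntegrand_le (hlam : 0 < lam) (hy : |y| ≤ M) (hqt : |q| ≤ t) (htQ : t ≤ Q) :
    |jumpIntegrand lam y q| ≤ lam * Real.exp (lam * (M + Q)) * (|y| + t) ^ 2 + t := by
  have hR : |lam * (q - q)| ≤ lam * (M + Q) := by
    rw [sub_self, mul_zero, abs_zero]
    exact mul_nonneg hlam.le
      (add_nonneg ((abs_nonneg _).trans hy) ((abs_nonneg _).trans (hqt.trans htQ)))
  have h := abs_jumpIntegrand_sub_le hlam (abs_mul_sub_le_mul_add hlam.le hy (hqt.trans htQ)) hR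
  rw [jumpIntegrand_self, sub_neg_eq_add, sub_self, abs_zero, add_zero] at h
  have hyq : |y - q| ≤ |y| + t := (abs_sub _ _).trans (add_le_add_right hqt _)
  calc |jumpIntegrand lam y q| ≤ |jumpIntegrand lam y q + q| + |q| := by
        simpa using abs_sub (jumpIntegrand lam y q + q) q
    _ ≤ lam * Real.exp (lam * (M + Q)) * |y - q| * |y - q| + t := add_le_add h hqt
    _ ≤ lam * Real.exp (lam * (M + Q)) * (|y| + t) ^ 2 + t := by
        rw [mul_assoc _ |y - q|, ← sq]
        gcongr

lemma abs_jumpIntegrand_sub_le_of_abs_le (hlam : 0 < lam) (hy : |y| ≤ M) (hy' : |y'| ≤ M)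
    (hqt : |q| ≤ t) (htQ : t ≤ Q) :
    |jumpIntegrand lam y q - jumpIntegrand lam y' q|
      ≤ lam * Real.exp (lam * (M + Q)) * ((|y - y'| + 2 * (|y'| + t)) * |y - y'|) := by
  have hQ := hqt.trans htQ
  refine (abs_jumpIntegrand_sub_le hlam (abs_mul_sub_le_mul_add hlam.le hy hQ)
    (abs_mul_sub_le_mul_add hlam.le hy' hQ)).trans ?_
  have hyq : |y - q| ≤ |y - y'| + |y' - q| := abs_sub_le _ _ _
  have hy'q : |y' - q| ≤ |y'| + t := (abs_sub _ _).trans (add_le_add_right hqt _)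
  rw [← mul_assoc]
  exact mul_le_mul_of_nonneg_right (mul_le_mul_of_nonneg_left (by linarith) (by positivity))
    (abs_nonneg _)

end JumpIntegrand

lemma abs_ciInf_sub_ciInf_le {ι : Sort*} [Nonempty ι] {A B : ι → ℝ} {ε : ℝ}
    (hB : BddBelow (range B)) (h : ∀ i, |A i - B i| ≤ ε) :
    |(⨅ i, A i) - ⨅ i, B i| ≤ ε := by
  obtain ⟨c, hc⟩ := hB
  have hA : BddBelow (range A) :=
    ⟨c - ε, by rintro _ ⟨i, rfl⟩; linarith [hc ⟨i, rfl⟩, (abs_le.1 (h i)).1]⟩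
  have h₁ : (⨅ i, B i) - ε ≤ ⨅ i, A i :=
    le_ciInf fun i => by linarith [ciInf_le ⟨c, hc⟩ i, (abs_le.1 (h i)).1]
  have h₂ : (⨅ i, A i) - ε ≤ ⨅ i, B i :=
    le_ciInf fun i => by linarith [ciInf_le hA i, (abs_le.1 (h i)).2]
  exact abs_le.2 ⟨by linarith, by linarith⟩

lemma abs_ciInf_le {ι : Sort*} [Nonempty ι] {A : ι → ℝ} {c : ℝ} (h : ∀ i, |A i| ≤ c) :
    |⨅ i, A i| ≤ c := by
  simpa using abs_ciInf_sub_ciInf_le (B := fun _ => (0 : ℝ))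
    ⟨0, by rintro _ ⟨_, rfl⟩; exact le_rfl⟩ (by simpa using h)

lemma measurable_iInf_of_continuous {α X : Type*} [MeasurableSpace α] [TopologicalSpace X]
    [TopologicalSpace.SeparableSpace X] {F : X → α → ℝ} (hmeas : ∀ x, Measurable (F x))
    (hcont : ∀ a, Continuous fun x => F x a) : Measurable fun a => ⨅ x, F x a := by
  obtain ⟨S, hScount, hSdense⟩ := TopologicalSpace.exists_countable_dense X
  have := hScount.to_subtype
  simp_rw [← hSdense.ciInf' (hcont _)]
  exact Measurable.iInf fun s => hmeas s

section SquareIntegrable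

variable {β : Type*} [MeasurableSpace β] {ρ : Measure β}

lemma integral_abs_mul_abs_le_sqrt_mul_sqrt {f g : β → ℝ} (hf : MemLp f 2 ρ) (hg : MemLp g 2 ρ) :
    ∫ e, |f e| * |g e| ∂ρ ≤ √(∫ e, f e ^ 2 ∂ρ) * √(∫ e, g e ^ 2 ∂ρ) := by
  have h := integral_mul_le_Lp_mul_Lq_of_nonneg Real.HolderConjugate.two_two
    (ae_of_all _ fun e => abs_nonneg (f e)) (ae_of_all _ fun e => abs_nonneg (g e))
    (by rw [ENNReal.ofReal_ofNat]; exact hf.abs) (by rw [ENNReal.ofReal_ofNat]; exact hg.abs)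
  simpa [Real.sqrt_eq_rpow, sq_abs] using h

lemma tendsto_integral_add_mul_abs_of_tendsto_integral_sq {d : ℕ → β → ℝ} {H : β → ℝ}
    (hd : ∀ n, MemLp (d n) 2 ρ) (hH : MemLp H 2 ρ) (hH0 : ∀ e, 0 ≤ H e)
    (hlim : Tendsto (fun n => ∫ e, d n e ^ 2 ∂ρ) atTop (𝓝 0)) :
    Tendsto (fun n => ∫ e, (|d n e| + H e) * |d n e| ∂ρ) atTop (𝓝 0) := by
  have hsplit : ∀ n, ∫ e, (|d n e| + H e) * |d n e| ∂ρ
      = ∫ e, d n e ^ 2 ∂ρ + ∫ e, |H e| * |d n e| ∂ρ := by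
    intro n
    rw [← integral_add (g := fun e => |H e| * |d n e|) (hd n).integrable_sq
      (hH.abs.integrable_mul (hd n).abs)]
    congr with e
    rw [abs_of_nonneg (hH0 e), ← sq_abs (d n e)]
    ring
  have hCS : Tendsto (fun n => √(∫ e, H e ^ 2 ∂ρ) * √(∫ e, d n e ^ 2 ∂ρ)) atTop (𝓝 0) := by
    simpa using ((Real.continuous_sqrt.tendsto 0).comp hlim).const_mul (√(∫ e, H e ^ 2 ∂ρ))
  simp_rw [hsplit]
  simpa using hlim.add (squeeze_zero (fun n => integral_nonneg fun e => by positivity)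
    (fun n => integral_abs_mul_abs_le_sqrt_mul_sqrt hH (hd n)) hCS)

end SquareIntegrable

section Kernel

variable {α β : Type*} [MeasurableSpace α] [MeasurableSpace β] {m : Measure α} {P : Kernel α β}

lemma integral_integral_norm_eq_integral_norm_comp {E : Type*} [NormedAddCommGroup E] {f : β → E}
    (hf : Integrable f (P ∘ₘ m)) :
    ∫ g, ∫ e, ‖f e‖ ∂P g ∂m = ∫ e, ‖f e‖ ∂(P ∘ₘ m) := by
  rw [integral_norm_eq_lintegral_enorm hf.1,
    integral_eq_lintegral_of_nonneg_ae (ae_of_all _ fun g => integral_nonneg fun e => norm_nonneg _)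
      (Measure.integrable_integral_norm_of_integrable_comp hf).1,
    Measure.lintegral_bind P.aemeasurable hf.1.enorm]
  congr 1
  refine lintegral_congr_ae ?_
  filter_upwards [Measure.ae_integrable_of_integrable_comp hf] with g hg
  exact ofReal_integral_norm_eq_lintegral_enorm hg

lemma exists_isFiniteKernel_ae_eq {K : α → Measure β} (hK : Measurable K)
    (h : ∀ᵐ g ∂m, K g univ ≤ 1) : ∃ P : Kernel α β, IsFiniteKernel P ∧ ∀ᵐ g ∂m, P g = K g := by
  classical
  have hs : MeasurableSet {g | K g univ ≤ 1} :=
    measurableSet_le ((Measure.measurable_coe MeasurableSet.univ).comp hK) measurable_const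
  refine ⟨⟨fun g => if K g univ ≤ 1 then K g else 0, Measurable.ite hs hK measurable_const⟩,
    ⟨1, ENNReal.one_lt_top, fun g => ?_⟩, ?_⟩
  · dsimp only [Kernel.coe_mk]
    split_ifs with hg
    exacts [hg, by simp]
  · filter_upwards [h] with g hg
    simp [hg]

end Kernel

section InfimumOfIntegrals

variable {α β X : Type*} [MeasurableSpace α] [MeasurableSpace β] {h h' : X → β → ℝ} {W D : β → ℝ}

lemma abs_iInf_add_integral_sub_le [Nonempty X] {ρ : Measure β} {c : X → ℝ} (hc : ∀ p, 0 ≤ c p)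
    (hh : ∀ p, Integrable (h p) ρ) (hh' : ∀ p, Integrable (h' p) ρ) (hW : ∀ p e, |h' p e| ≤ W e)
    (hWint : Integrable W ρ) (hD : ∀ p e, |h p e - h' p e| ≤ D e) (hDint : Integrable D ρ) :
    |(⨅ p, (c p + ∫ e, h p e ∂ρ)) - ⨅ p, (c p + ∫ e, h' p e ∂ρ)| ≤ ∫ e, D e ∂ρ := by
  refine abs_ciInf_sub_ciInf_le ⟨-∫ e, W e ∂ρ, ?_⟩ fun p => ?_
  · rintro _ ⟨p, rfl⟩
    have := norm_integral_le_of_norm_le hWint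
      (ae_of_all _ fun e => (Real.norm_eq_abs _).trans_le (hW p e))
    rw [Real.norm_eq_abs] at this
    linarith [hc p, neg_abs_le (∫ e, h' p e ∂ρ)]
  · rw [add_sub_add_left_eq_sub, ← integral_sub (hh p) (hh' p)]
    exact norm_integral_le_of_norm_le hDint
      (ae_of_all _ fun e => (Real.norm_eq_abs _).trans_le (hD p e))

variable [TopologicalSpace X] {m : Measure α} {P : Kernel α β} [IsFiniteKernel P] {C C' : ℝ}

lemma measurable_iInf_integral_kernel [TopologicalSpace.SeparableSpace X]
    [FirstCountableTopology X] (hmeas : ∀ p, Measurable (h p))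
    (hcont : ∀ e, Continuous fun p => h p e) (hC : ∀ p e, |h p e| ≤ C) :
    Measurable fun g => ⨅ p, ∫ e, h p e ∂P g :=
  measurable_iInf_of_continuous (fun p => (hmeas p).stronglyMeasurable.integral_kernel.measurable)
    fun _ => continuous_of_dominated (fun p => (hmeas p).aestronglyMeasurable)
      (fun p => ae_of_all _ fun e => (Real.norm_eq_abs _).trans_le (hC p e))
      (integrable_const C) (ae_of_all _ hcont)

lemma integrable_iInf_integral_kernel [Nonempty X] [TopologicalSpace.SeparableSpace X]
    [FirstCountableTopology X] (hmeas : ∀ p, Measurable (h p))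
    (hcont : ∀ e, Continuous fun p => h p e) (hC : ∀ p e, |h p e| ≤ C)
    (hW : ∀ p e, |h p e| ≤ W e) (hWint : Integrable W (P ∘ₘ m)) :
    Integrable (fun g => ⨅ p, ∫ e, h p e ∂P g) m := by
  refine (Measure.integrable_integral_norm_of_integrable_comp hWint).mono'
    (measurable_iInf_integral_kernel hmeas hcont hC).aestronglyMeasurable ?_
  filter_upwards [Measure.ae_integrable_of_integrable_comp hWint] with g hg
  rw [Real.norm_eq_abs]
  refine abs_ciInf_le fun p => (Real.norm_eq_abs _).symm.trans_le ?_
  exact norm_integral_le_of_norm_le hg.norm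
    (ae_of_all _ fun e => (Real.norm_eq_abs _).trans_le
      ((hW p e).trans ((le_abs_self _).trans_eq (Real.norm_eq_abs _).symm)))

lemma abs_integral_iInf_integral_kernel_sub_le [Nonempty X] [TopologicalSpace.SeparableSpace X]
    [FirstCountableTopology X] (hmeas : ∀ p, Measurable (h p)) (hmeas' : ∀ p, Measurable (h' p))
    (hcont : ∀ e, Continuous fun p => h p e) (hcont' : ∀ e, Continuous fun p => h' p e)
    (hC : ∀ p e, |h p e| ≤ C) (hC' : ∀ p e, |h' p e| ≤ C') {W' : β → ℝ}
    (hW : ∀ p e, |h p e| ≤ W e) (hW' : ∀ p e, |h' p e| ≤ W' e)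
    (hWint : Integrable W (P ∘ₘ m)) (hWint' : Integrable W' (P ∘ₘ m))
    (hD : ∀ p e, |h p e - h' p e| ≤ D e) (hDint : Integrable D (P ∘ₘ m)) :
    |(∫ g, ⨅ p, ∫ e, h p e ∂P g ∂m) - ∫ g, ⨅ p, ∫ e, h' p e ∂P g ∂m| ≤ ∫ e, D e ∂(P ∘ₘ m) := by
  obtain ⟨p₀⟩ := ‹Nonempty X›
  have hDnorm : ∫ e, D e ∂(P ∘ₘ m) = ∫ e, ‖D e‖ ∂(P ∘ₘ m) := by
    simp_rw [Real.norm_of_nonneg ((abs_nonneg _).trans (hD p₀ _))]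
  have hint : ∀ {k : X → β → ℝ} {c : ℝ}, (∀ p, Measurable (k p)) → (∀ p e, |k p e| ≤ c) →
      ∀ g p, Integrable (k p) (P g) := fun hk hkC g p =>
    Integrable.of_bound (hk p).aestronglyMeasurable _
      (ae_of_all _ fun e => (Real.norm_eq_abs _).trans_le (hkC p e))
  have hI := integrable_iInf_integral_kernel (m := m) hmeas hcont hC hW hWint
  have hI' := integrable_iInf_integral_kernel (m := m) hmeas' hcont' hC' hW' hWint'
  rw [← integral_sub hI hI', hDnorm, ← integral_integral_norm_eq_integral_norm_comp hDint,
    ← Real.norm_eq_abs]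
  refine norm_integral_le_of_norm_le (Measure.integrable_integral_norm_of_integrable_comp hDint) ?_
  filter_upwards [Measure.ae_integrable_of_integrable_comp hDint] with g hg
  refine abs_ciInf_sub_ciInf_le ⟨-(C' * (P g).real univ), ?_⟩ fun p => ?_
  · rintro _ ⟨p, rfl⟩
    have := norm_integral_le_of_norm_le_const (μ := P g)
      (ae_of_all _ fun e => (Real.norm_eq_abs _).trans_le (hC' p e))
    rw [Real.norm_eq_abs] at this
    linarith [neg_abs_le (∫ e, h' p e ∂P g)]
  · rw [← integral_sub (hint hmeas hC g p) (hint hmeas' hC' g p)]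
    exact norm_integral_le_of_norm_le hg.norm
      (ae_of_all _ fun e => (Real.norm_eq_abs _).trans_le
        ((hD p e).trans ((le_abs_self _).trans_eq (Real.norm_eq_abs _).symm)))

end InfimumOfIntegrals

def jumpMajorant (lam R pmax : ℝ) (η v : ℝ → ℝ) (e : ℝ) : ℝ :=
  lam * Real.exp R * (|v e| + pmax * |η e|) ^ 2 + pmax * |η e|

def jumpDiffMajorant (lam R pmax : ℝ) (η v w : ℝ → ℝ) (e : ℝ) : ℝ :=
  lam * Real.exp R * ((|v e - w e| + 2 * (|w e| + pmax * |η e|)) * |v e - w e|)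

section Driver

variable {ν : Measure ℝ} {η v w : ℝ → ℝ} {lam R pmax M C₀ p : ℝ}

lemma abs_mul_le_of_abs_le (hp : |p| ≤ pmax) (x : ℝ) : |p * x| ≤ pmax * |x| := by
  rw [abs_mul]
  exact mul_le_mul_of_nonneg_right hp (abs_nonneg x)

lemma abs_jumpIntegrand_comp_le (hlam : 0 < lam) (hvM : ∀ e, |v e| ≤ M)
    (hηC : ∀ e, |η e| ≤ C₀) (hp : |p| ≤ pmax) (e : ℝ) :
    |jumpIntegrand lam (v e) (p * η e)| ≤ jumpMajorant lam (lam * (M + pmax * C₀)) pmax η v e :=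
  abs_jumpIntegrand_le hlam (hvM e) (abs_mul_le_of_abs_le hp _)
    (mul_le_mul_of_nonneg_left (hηC e) ((abs_nonneg p).trans hp))

lemma abs_jumpIntegrand_comp_le_const (hlam : 0 < lam) (hvM : ∀ e, |v e| ≤ M)
    (hηC : ∀ e, |η e| ≤ C₀) (hp : |p| ≤ pmax) (e : ℝ) :
    |jumpIntegrand lam (v e) (p * η e)|
      ≤ lam * Real.exp (lam * (M + pmax * C₀)) * (M + pmax * C₀) ^ 2 + pmax * C₀ := by
  have hq : |p * η e| ≤ pmax * C₀ := (abs_mul_le_of_abs_le hp _).trans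
    (mul_le_mul_of_nonneg_left (hηC e) ((abs_nonneg p).trans hp))
  have hQ : 0 ≤ pmax * C₀ := (abs_nonneg _).trans hq
  refine (abs_jumpIntegrand_le hlam (hvM e) hq le_rfl).trans ?_
  gcongr
  exact hvM e

lemma abs_jumpIntegrand_comp_sub_le (hlam : 0 < lam) (hvM : ∀ e, |v e| ≤ M)
    (hwM : ∀ e, |w e| ≤ M) (hηC : ∀ e, |η e| ≤ C₀) (hp : |p| ≤ pmax) (e : ℝ) :
    |jumpIntegrand lam (v e) (p * η e) - jumpIntegrand lam (w e) (p * η e)|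
      ≤ jumpDiffMajorant lam (lam * (M + pmax * C₀)) pmax η v w e :=
  abs_jumpIntegrand_sub_le_of_abs_le hlam (hvM e) (hwM e) (abs_mul_le_of_abs_le hp _)
    (mul_le_mul_of_nonneg_left (hηC e) ((abs_nonneg p).trans hp))

lemma jumpDiffMajorant_nonneg (hlam : 0 ≤ lam) (hpmax : 0 ≤ pmax) (e : ℝ) :
    0 ≤ jumpDiffMajorant lam R pmax η v w e := by
  unfold jumpDiffMajorant
  positivity

lemma integrable_jumpMajorant (hv2 : MemLp v 2 ν) (hη2 : MemLp η 2 ν) (hη1 : Integrable η ν) :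
    Integrable (jumpMajorant lam R pmax η v) ν :=
  ((hv2.abs.add (hη2.abs.const_mul pmax)).integrable_sq.const_mul _).add (hη1.abs.const_mul pmax)

lemma integrable_jumpDiffMajorant (hv2 : MemLp v 2 ν) (hw2 : MemLp w 2 ν) (hη2 : MemLp η 2 ν) :
    Integrable (jumpDiffMajorant lam R pmax η v w) ν :=
  (((hv2.sub hw2).abs.add ((hw2.abs.add (hη2.abs.const_mul pmax)).const_mul 2)).integrable_mul
    (hv2.sub hw2).abs).const_mul _

lemma measurable_jumpIntegrand_comp (hv : Measurable v) (hη : Measurable η) (p : ℝ) :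
    Measurable fun e => jumpIntegrand lam (v e) (p * η e) := by
  unfold jumpIntegrand
  fun_prop

lemma integrable_jumpIntegrand_comp (hlam : 0 < lam) (hv : Measurable v) (hvM : ∀ e, |v e| ≤ M)
    (hv2 : MemLp v 2 ν) (hη : Measurable η) (hηC : ∀ e, |η e| ≤ C₀) (hη2 : MemLp η 2 ν)
    (hη1 : Integrable η ν) (hp : |p| ≤ pmax) :
    Integrable (fun e => jumpIntegrand lam (v e) (p * η e)) ν :=
  (integrable_jumpMajorant hv2 hη2 hη1).mono'
    (measurable_jumpIntegrand_comp hv hη p).aestronglyMeasurable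
    (ae_of_all _ fun e =>
      (Real.norm_eq_abs _).trans_le (abs_jumpIntegrand_comp_le hlam hvM hηC hp e))

lemma tendsto_integral_jumpDiffMajorant {v : ℕ → ℝ → ℝ} (hv2 : ∀ n, MemLp (v n) 2 ν)
    (hw2 : MemLp w 2 ν) (hη2 : MemLp η 2 ν) (hpmax : 0 ≤ pmax)
    (hlim : Tendsto (fun n => ∫ e, (v n e - w e) ^ 2 ∂ν) atTop (𝓝 0)) :
    Tendsto (fun n => ∫ e, jumpDiffMajorant lam R pmax η (v n) w e ∂ν) atTop (𝓝 0) := by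
  have h := (tendsto_integral_add_mul_abs_of_tendsto_integral_sq (d := fun n e => v n e - w e)
    (H := fun e => 2 * (|w e| + pmax * |η e|)) (fun n => (hv2 n).sub hw2)
    ((hw2.abs.add (hη2.abs.const_mul pmax)).const_mul 2) (fun e => by positivity) hlim).const_mul
    (lam * Real.exp R)
  simpa only [jumpDiffMajorant, integral_const_mul, mul_zero] using h

end Driver

lemma memLp_two_of_abs_le_mul_min_one_abs {ν : Measure ℝ} {η : ℝ → ℝ} {C : ℝ}
    (hη : Measurable η) (hb : ∀ e, |η e| ≤ C * min 1 |e|)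
    (hν : ∫⁻ e, ENNReal.ofReal (min 1 (e ^ 2)) ∂ν < ⊤) : MemLp η 2 ν := by
  have hint : Integrable (fun e : ℝ => min 1 (e ^ 2)) ν :=
    ⟨by fun_prop, (hasFiniteIntegral_iff_ofReal (ae_of_all _ fun e => by positivity)).2 hν⟩
  refine (memLp_two_iff_integrable_sq hη.aestronglyMeasurable).2 ((hint.const_mul (C ^ 2)).mono'
    (hη.pow_const 2).aestronglyMeasurable (ae_of_all _ fun e => ?_))
  have hmin : min 1 |e| ^ 2 = min 1 (e ^ 2) := by
    rcases le_total 1 |e| with h | h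
    · rw [min_eq_left h, min_eq_left (by nlinarith [sq_abs e]), one_pow]
    · rw [min_eq_right h, min_eq_right (by nlinarith [sq_abs e, abs_nonneg e]), sq_abs]
  rw [Real.norm_of_nonneg (sq_nonneg _), ← sq_abs, ← hmin, ← mul_pow]
  exact pow_le_pow_left₀ (abs_nonneg _) (hb e) 2

lemma f2d_eq_integral {η γ v : ℝ → ℝ} {K : ℝ → Measure ℝ} {lam g p : ℝ} (hγ : Measurable γ)
    (hK : K g univ = 1 ∧ K g {e | γ e = g} = 1) :
    f2d η γ K lam g v p = ∫ e, jumpIntegrand lam (v e) (p * η e) ∂K g := by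
  have : IsFiniteMeasure (K g) := ⟨by simp [hK.1]⟩
  have hae : ∀ᵐ e ∂K g, e ∈ {e | γ e = g} :=
    (ae_iff_measure_eq (hγ (measurableSet_singleton g)).nullMeasurableSet).2 (hK.2.trans hK.1.symm)
  rw [f2d, Measure.restrict_eq_self_of_ae_mem hae]
  rfl

section DriverEstimates

variable {ν : Measure ℝ} {η γ v w : ℝ → ℝ} {lam pmax M C₀ a b : ℝ} [Nonempty (Icc a b)]

lemma abs_iInf_f1d_sub_le (hlam : 0 < lam) (hpmax : ∀ p ∈ Icc a b, |p| ≤ pmax)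
    (hη : Measurable η) (hηC : ∀ e, |η e| ≤ C₀) (hη2 : MemLp η 2 ν) (hη1 : Integrable η ν)
    (hv : Measurable v) (hvM : ∀ e, |v e| ≤ M) (hv2 : MemLp v 2 ν)
    (hw : Measurable w) (hwM : ∀ e, |w e| ≤ M) (hw2 : MemLp w 2 ν) (sig Cke z : ℝ) :
    |(⨅ p : Icc a b, f1d ν η γ lam sig Cke z v p) - ⨅ p : Icc a b, f1d ν η γ lam sig Cke z w p|
      ≤ ∫ e, jumpDiffMajorant lam (lam * (M + pmax * C₀)) pmax η v w e ∂ν := by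
  have hp : ∀ p : Icc a b, |(p : ℝ)| ≤ pmax := fun p => hpmax p p.2
  have hpmax0 : 0 ≤ pmax := (abs_nonneg _).trans (hp (Classical.arbitrary _))
  refine (abs_iInf_add_integral_sub_le (ρ := ν.restrict {e | γ e = 0})
    (h := fun (p : Icc a b) e => jumpIntegrand lam (v e) (p * η e))
    (h' := fun (p : Icc a b) e => jumpIntegrand lam (w e) (p * η e))
    (fun p => by positivity)
    (fun p => (integrable_jumpIntegrand_comp hlam hv hvM hv2 hη hηC hη2 hη1 (hp p)).restrict)
    (fun p => (integrable_jumpIntegrand_comp hlam hw hwM hw2 hη hηC hη2 hη1 (hp p)).restrict)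
    (fun p => abs_jumpIntegrand_comp_le hlam hwM hηC (hp p))
    (integrable_jumpMajorant hw2 hη2 hη1).restrict
    (fun p => abs_jumpIntegrand_comp_sub_le hlam hvM hwM hηC (hp p))
    (integrable_jumpDiffMajorant hv2 hw2 hη2).restrict).trans ?_
  exact setIntegral_le_integral (integrable_jumpDiffMajorant hv2 hw2 hη2)
    (ae_of_all _ (jumpDiffMajorant_nonneg hlam.le hpmax0))

lemma abs_integral_iInf_f2d_sub_le {μ : Measure ℝ} {K : ℝ → Measure ℝ} (hK : Measurable K)
    (hKprob : ∀ᵐ g ∂μ.restrict ({0}ᶜ : Set ℝ), K g univ = 1 ∧ K g {e | γ e = g} = 1)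
    (hdis : ∀ B : Set ℝ, MeasurableSet B →
      ν (B ∩ {e | γ e ≠ 0}) = ∫⁻ g in ({0}ᶜ : Set ℝ), K g B ∂μ)
    (hγ : Measurable γ) (hlam : 0 < lam) (hpmax : ∀ p ∈ Icc a b, |p| ≤ pmax)
    (hη : Measurable η) (hηC : ∀ e, |η e| ≤ C₀) (hη2 : MemLp η 2 ν) (hη1 : Integrable η ν)
    (hv : Measurable v) (hvM : ∀ e, |v e| ≤ M) (hv2 : MemLp v 2 ν)
    (hw : Measurable w) (hwM : ∀ e, |w e| ≤ M) (hw2 : MemLp w 2 ν) :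
    |(∫ g in ({0}ᶜ : Set ℝ), (⨅ p : Icc a b, f2d η γ K lam g v p) ∂μ)
        - ∫ g in ({0}ᶜ : Set ℝ), (⨅ p : Icc a b, f2d η γ K lam g w p) ∂μ|
      ≤ ∫ e, jumpDiffMajorant lam (lam * (M + pmax * C₀)) pmax η v w e ∂ν := by
  have hp : ∀ p : Icc a b, |(p : ℝ)| ≤ pmax := fun p => hpmax p p.2
  have hpmax0 : 0 ≤ pmax := (abs_nonneg _).trans (hp (Classical.arbitrary _))
  -- `K` is a probability kernel only a.e.; measurability of `g ↦ ∫ f ∂K g` needs a genuine kernel.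
  obtain ⟨P, hPfin, hPK⟩ := exists_isFiniteKernel_ae_eq hK (hKprob.mono fun g hg => hg.1.le)
  have hcomp : P ∘ₘ μ.restrict ({0}ᶜ : Set ℝ) = ν.restrict {e | γ e ≠ 0} := by
    ext B hB
    rw [Measure.bind_apply hB P.aemeasurable, Measure.restrict_apply hB, hdis B hB]
    exact lintegral_congr_ae (hPK.mono fun g hg => by simp only [hg])
  have hf2d : ∀ u : ℝ → ℝ, (fun g => ⨅ p : Icc a b, f2d η γ K lam g u p)
      =ᵐ[μ.restrict {0}ᶜ] fun g => ⨅ p : Icc a b, ∫ e, jumpIntegrand lam (u e) (p * η e) ∂P g := by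
    intro u
    filter_upwards [hKprob, hPK] with g hKg hPg
    simp_rw [f2d_eq_integral hγ hKg, hPg]
  rw [integral_congr_ae (hf2d v), integral_congr_ae (hf2d w)]
  refine (abs_integral_iInf_integral_kernel_sub_le
    (h := fun (p : Icc a b) e => jumpIntegrand lam (v e) (p * η e))
    (h' := fun (p : Icc a b) e => jumpIntegrand lam (w e) (p * η e))
    (fun p => measurable_jumpIntegrand_comp hv hη p)
    (fun p => measurable_jumpIntegrand_comp hw hη p)
    (fun e => by unfold jumpIntegrand; fun_prop) (fun e => by unfold jumpIntegrand; fun_prop)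
    (fun p => abs_jumpIntegrand_comp_le_const hlam hvM hηC (hp p))
    (fun p => abs_jumpIntegrand_comp_le_const hlam hwM hηC (hp p))
    (fun p => abs_jumpIntegrand_comp_le hlam hvM hηC (hp p))
    (fun p => abs_jumpIntegrand_comp_le hlam hwM hηC (hp p))
    (hcomp ▸ (integrable_jumpMajorant hv2 hη2 hη1).restrict)
    (hcomp ▸ (integrable_jumpMajorant hw2 hη2 hη1).restrict)
    (fun p => abs_jumpIntegrand_comp_sub_le hlam hvM hwM hηC (hp p))
    (hcomp ▸ (integrable_jumpDiffMajorant hv2 hw2 hη2).restrict)).trans ?_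
  rw [hcomp]
  exact setIntegral_le_integral (integrable_jumpDiffMajorant hv2 hw2 hη2)
    (ae_of_all _ (jumpDiffMajorant_nonneg hlam.le hpmax0))

end DriverEstimates

lemma abs_fdrv_sub_le {ν μ : Measure ℝ} {η γ v w : ℝ → ℝ} {K : ℝ → Measure ℝ}
    {lam pil pib pmax M C₀ : ℝ} [Nonempty (Icc (-pil) pib)] (hK : Measurable K)
    (hKprob : ∀ᵐ g ∂μ.restrict ({0}ᶜ : Set ℝ), K g univ = 1 ∧ K g {e | γ e = g} = 1)
    (hdis : ∀ B : Set ℝ, MeasurableSet B →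
      ν (B ∩ {e | γ e ≠ 0}) = ∫⁻ g in ({0}ᶜ : Set ℝ), K g B ∂μ)
    (hγ : Measurable γ) (hlam : 0 < lam) (hpmax : ∀ p ∈ Icc (-pil) pib, |p| ≤ pmax)
    (hη : Measurable η) (hηC : ∀ e, |η e| ≤ C₀) (hη2 : MemLp η 2 ν) (hη1 : Integrable η ν)
    (hv : Measurable v) (hvM : ∀ e, |v e| ≤ M) (hv2 : MemLp v 2 ν)
    (hw : Measurable w) (hwM : ∀ e, |w e| ≤ M) (hw2 : MemLp w 2 ν) (sig Cke z : ℝ) :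
    |fdrv ν μ η γ K lam sig Cke pil pib z v - fdrv ν μ η γ K lam sig Cke pil pib z w|
      ≤ 2 * ∫ e, jumpDiffMajorant lam (lam * (M + pmax * C₀)) pmax η v w e ∂ν := by
  have h₁ := abs_iInf_f1d_sub_le (γ := γ) hlam hpmax hη hηC hη2 hη1 hv hvM hv2 hw hwM hw2 sig Cke z
  have h₂ := abs_integral_iInf_f2d_sub_le hK hKprob hdis hγ hlam hpmax hη hηC hη2 hη1
    hv hvM hv2 hw hwM hw2
  obtain ⟨h₁l, h₁r⟩ := abs_le.1 h₁
  obtain ⟨h₂l, h₂r⟩ := abs_le.1 h₂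
  unfold fdrv
  exact abs_le.2 ⟨by linarith, by linarith⟩

theorem driver_continuous_in_u_general
    (ν : Measure ℝ)
    (hν2 : (∫⁻ e, ENNReal.ofReal (min 1 (e ^ 2)) ∂ν) < ⊤)
    (η γ : ℝ → ℝ) (hηmeas : Measurable η) (hγmeas : Measurable γ)
    (C₀ : ℝ) (hC₀ : 0 < C₀)
    (hηb : ∀ e, |η e| ≤ C₀ * min 1 |e|)
    (hηint : Integrable η ν)
    (μ : Measure ℝ)
    (K : ℝ → Measure ℝ) (hKmeas : Measurable K)
    (hKprob : ∀ᵐ g ∂μ.restrict ({0}ᶜ : Set ℝ),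
      K g Set.univ = 1 ∧ K g {e | γ e = g} = 1)
    (hdis : ∀ B : Set ℝ, MeasurableSet B →
      ν (B ∩ {e | γ e ≠ 0}) = ∫⁻ g in ({0}ᶜ : Set ℝ), K g B ∂μ)
    (lam sig pil pib : ℝ) (hlam : 0 < lam)
    (hpil : 0 < pil) (hpib : 0 < pib)
    (Cke : ℝ)
    (u : ℝ → ℝ) (humeas : Measurable u) (hub : ∃ M : ℝ, ∀ e, |u e| ≤ M)
    (hu2 : Integrable (fun e => (u e) ^ 2) ν)
    (un : ℕ → ℝ → ℝ) (hunmeas : ∀ n, Measurable (un n))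
    (hun2 : ∀ n, Integrable (fun e => (un n e) ^ 2) ν)
    (hunb : ∃ M : ℝ, ∀ n e, |un n e| ≤ M)
    (hconv : Filter.Tendsto (fun n => ∫ e, (un n e - u e) ^ 2 ∂ν)
      Filter.atTop (nhds 0)) :
    ∀ z : ℝ,
      Filter.Tendsto (fun n => fdrv ν μ η γ K lam sig Cke pil pib z (un n))
        Filter.atTop (nhds (fdrv ν μ η γ K lam sig Cke pil pib z u)) := by
  intro z
  obtain ⟨M₁, hM₁⟩ := hub
  obtain ⟨M₂, hM₂⟩ := hunb
  have huM : ∀ e, |u e| ≤ max M₁ M₂ := fun e => (hM₁ e).trans (le_max_left _ _)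
  have hunM : ∀ n e, |un n e| ≤ max M₁ M₂ := fun n e => (hM₂ n e).trans (le_max_right _ _)
  have hηC : ∀ e, |η e| ≤ C₀ := fun e =>
    (hηb e).trans (mul_le_of_le_one_right hC₀.le (min_le_left _ _))
  have hη2 := memLp_two_of_abs_le_mul_min_one_abs hηmeas hηb hν2
  have hu2' := (memLp_two_iff_integrable_sq humeas.aestronglyMeasurable).2 hu2
  have hun2' n := (memLp_two_iff_integrable_sq (hunmeas n).aestronglyMeasurable).2 (hun2 n)
  have : Nonempty (Icc (-pil) pib) := (nonempty_Icc.2 (by linarith)).to_subtype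
  have hpmax : ∀ p ∈ Icc (-pil) pib, |p| ≤ max |-pil| |pib| := fun p hp =>
    abs_le_max_abs_abs hp.1 hp.2
  refine tendsto_iff_norm_sub_tendsto_zero.2 (squeeze_zero (fun n => norm_nonneg _)
    (fun n => (Real.norm_eq_abs _).trans_le (abs_fdrv_sub_le hKmeas hKprob hdis hγmeas hlam hpmax
      hηmeas hηC hη2 hηint (hunmeas n) (hunM n) (hun2' n) humeas huM hu2' sig Cke z)) ?_)
  simpa using (tendsto_integral_jumpDiffMajorant hun2' hu2' hη2 (le_max_of_le_left (abs_nonneg _))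
    hconv).const_mul 2

/-- **Continuity of the driver in the jump variable**: if `u` is bounded Borel and
square-`ν`-integrable, and `(u_n)` are Borel, square-`ν`-integrable, uniformly bounded and
converge to `u` in `L²(ν)`, then `f(z, u_n) → f(z, u)` for every `z`. -/
theorem driver_continuous_in_u
    (ν : Measure ℝ) [SigmaFinite ν]
    (hν0 : ν {0} = 0)
    (hν2 : (∫⁻ e, ENNReal.ofReal (min 1 (e ^ 2)) ∂ν) < ⊤)
    (η γ : ℝ → ℝ) (hηmeas : Measurable η) (hγmeas : Measurable γ)
    (C₀ : ℝ) (hC₀ : 0 < C₀)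
    (hηb : ∀ e, |η e| ≤ C₀ * min 1 |e|)
    (hγb : ∀ e, |γ e| ≤ C₀ * min 1 |e|)
    (hηint : Integrable η ν)
    (μ : Measure ℝ)
    (hμ : ∀ B : Set ℝ, MeasurableSet B → μ B = ν (γ ⁻¹' (B \ {0})))
    (K : ℝ → Measure ℝ) (hKmeas : Measurable K)
    (hKprob : ∀ᵐ g ∂μ.restrict ({0}ᶜ : Set ℝ),
      K g Set.univ = 1 ∧ K g {e | γ e = g} = 1)
    (hdis : ∀ B : Set ℝ, MeasurableSet B →
      ν (B ∩ {e | γ e ≠ 0}) = ∫⁻ g in ({0}ᶜ : Set ℝ), K g B ∂μ)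
    (lam sig pil pib : ℝ) (hlam : 0 < lam) (hsig : 0 < sig)
    (hpil : 0 < pil) (hpib : 0 < pib)
    (κ : ℝ) (Cke : ℝ) (hCke : Cke = (κ - ∫ e, η e ∂ν) / (lam * sig))
    (u : ℝ → ℝ) (humeas : Measurable u) (hub : ∃ M : ℝ, ∀ e, |u e| ≤ M)
    (hu2 : Integrable (fun e => (u e) ^ 2) ν)
    (un : ℕ → ℝ → ℝ) (hunmeas : ∀ n, Measurable (un n))
    (hun2 : ∀ n, Integrable (fun e => (un n e) ^ 2) ν)
    (hunb : ∃ M : ℝ, ∀ n e, |un n e| ≤ M)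
    (hconv : Filter.Tendsto (fun n => ∫ e, (un n e - u e) ^ 2 ∂ν)
      Filter.atTop (nhds 0)) :
    ∀ z : ℝ,
      Filter.Tendsto (fun n => fdrv ν μ η γ K lam sig Cke pil pib z (un n))
        Filter.atTop (nhds (fdrv ν μ η γ K lam sig Cke pil pib z u)) :=
  driver_continuous_in_u_general ν hν2 η γ hηmeas hγmeas C₀ hC₀ hηb hηint μ K hKmeas hKprob hdis lam
    sig pil pib hlam hpil hpib Cke u humeas hub hu2 un hunmeas hun2 hunb hconv
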